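/- arXiv:math/0209276 — 2 statements merged into one kernel-verified Lean document; each statement's English description precedes it below -/
import Mathlib

section
/- Let λ be a Ferrers diagram (set of unit squares of a partition placed in the northwest corner of the nonnegative quadrant, in English notation), and let N(m,n) denote the number of northeastern lattice paths from (m,0) to (0,n) that do not pass through the interior of λ. Then for all m, n ≥ 1: N(m-1,n+1) * N(m+1,n-1) ≤ N(m,n)^2. -/
/-- A northeastern lattice path from `(m,0)` to `(0,n)`: points `(i,j)` with `i` the row
(increasing southward) and `j` the column (increasing eastward); each step goes one unit
north (`i` decreases) or east (`j` increases). The point sequence is frozen at `(0,n)`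
after `m+n` steps. -/
structure NEPath (m n : ℕ) where
  pts : ℕ → ℕ × ℕ
  start : pts 0 = (m, 0)
  step : ∀ k < m + n,
    ((pts (k+1)).1 + 1 = (pts k).1 ∧ (pts (k+1)).2 = (pts k).2) ∨
    ((pts (k+1)).1 = (pts k).1 ∧ (pts (k+1)).2 = (pts k).2 + 1)
  tail : ∀ k, m + n ≤ k → pts k = (0, n)

/-- A path avoids (the interior of) the Ferrers diagram with row lengths `lam`
(rows indexed from the north starting at 0) iff each of its points `(i,j)` lies weakly
southeast of the staircase boundary, i.e. `lam i ≤ j`; touching the boundary is allowed. -/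
def Avoids (lam : ℕ → ℕ) {m n : ℕ} (p : NEPath m n) : Prop :=
  ∀ k, lam (p.pts k).1 ≤ (p.pts k).2

/-- `pathCount lam m n` is the number of northeastern lattice paths from `(m,0)` to `(0,n)`
that do not go inside the Ferrers diagram `lam`. -/
noncomputable def pathCount (lam : ℕ → ℕ) (m n : ℕ) : ℕ :=
  Nat.card {p : NEPath m n // Avoids lam p}

/-- `lam` is the row-length function of the Ferrers diagram of a partition:
weakly decreasing with finitely many nonzero rows. -/
def IsFerrers (lam : ℕ → ℕ) : Prop :=
  Antitone lam ∧ ∃ K, ∀ i, K ≤ i → lam i = 0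

/-!
Recording the column at which a path enters each row `i < m` identifies the admissible paths
from `(m,0)` to `(0,n)` with the antitone tuples `x : Fin m → ℤ` such that `lam i ≤ x i ≤ n`
(provided `lam m = 0`; otherwise there are none). Such tuples are the antitone points of an order
interval, and pointwise `max`/`min` of points of two intervals lie in the `max`/`min` of the
intervals, so the Ahlswede–Daykin inequality `|A| |B| ≤ |A ⊼ B| |A ⊻ B|` compares products of
such counts. Translating the tuples counted by `N(m,n+1)` by `-1` gives
`N(m,n+1) N(m,n-1) ≤ N(m,n)^2`, and padding a tuple of length `m - 1` to `(a, x, 0)`, which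
moves its path one row south, gives `N(m-1,n+1) N(m+1,n-1) ≤ N(m,n+1) N(m,n-1)`.
-/

open Finset

section AntitoneIcc

variable {ι : Type*} [Fintype ι] [Preorder ι]

open Classical in
noncomputable def antitoneIcc (L U : ι → ℤ) : Finset (ι → ℤ) :=
  {x ∈ Icc L U | Antitone x}

lemma mem_antitoneIcc {L U x : ι → ℤ} :
    x ∈ antitoneIcc L U ↔ L ≤ x ∧ x ≤ U ∧ Antitone x := by
  simp [antitoneIcc, and_assoc]

lemma card_antitoneIcc_mul_card_le {L₁ U₁ L₂ U₂ L U L' U' : ι → ℤ}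
    (hL : L ≤ L₁ ⊓ L₂) (hU : U₁ ⊓ U₂ ≤ U) (hL' : L' ≤ L₁ ⊔ L₂) (hU' : U₁ ⊔ U₂ ≤ U') :
    #(antitoneIcc L₁ U₁) * #(antitoneIcc L₂ U₂) ≤
      #(antitoneIcc L U) * #(antitoneIcc L' U') := by
  classical
  refine (le_card_infs_mul_card_sups _ _).trans
    (Nat.mul_le_mul (card_le_card ?_) (card_le_card ?_))
  · refine infs_subset_iff.2 fun x hx y hy => ?_
    rw [mem_antitoneIcc] at hx hy ⊢
    exact ⟨hL.trans (inf_le_inf hx.1 hy.1), (inf_le_inf hx.2.1 hy.2.1).trans hU,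
      hx.2.2.inf hy.2.2⟩
  · refine sups_subset_iff.2 fun x hx y hy => ?_
    rw [mem_antitoneIcc] at hx hy ⊢
    exact ⟨hL'.trans (sup_le_sup hx.1 hy.1), (sup_le_sup hx.2.1 hy.2.1).trans hU',
      hx.2.2.sup hy.2.2⟩

lemma card_antitoneIcc_add_const (L U : ι → ℤ) (c : ℤ) :
    #(antitoneIcc (fun i => L i + c) (fun i => U i + c)) = #(antitoneIcc L U) := by
  have mem_shift : ∀ {L U x : ι → ℤ} (d : ℤ), x ∈ antitoneIcc L U →
      (fun i => x i + d) ∈ antitoneIcc (fun i => L i + d) (fun i => U i + d) := by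
    intro L U x d hx
    rw [mem_antitoneIcc] at hx ⊢
    exact ⟨fun i => by simpa using hx.1 i, fun i => by simpa using hx.2.1 i,
      fun i j hij => by simpa using hx.2.2 hij⟩
  refine card_nbij' (fun x i => x i + -c) (fun x i => x i + c) (fun x hx => ?_)
    (fun x hx => mem_shift c hx) (fun x _ => by simp) (fun x _ => by simp)
  simpa using mem_shift (-c) hx

lemma card_antitoneIcc_add_one_mul_card_sub_one_le (L U : ι → ℤ) :
    #(antitoneIcc L (fun i => U i + 1)) * #(antitoneIcc L (fun i => U i - 1)) ≤
      #(antitoneIcc L U) ^ 2 := by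
  calc #(antitoneIcc L (fun i => U i + 1)) * #(antitoneIcc L (fun i => U i - 1))
      = #(antitoneIcc (fun i => L i - 1) U) * #(antitoneIcc L (fun i => U i - 1)) := by
        rw [← card_antitoneIcc_add_const (fun i => L i - 1) U 1]
        simp only [sub_add_cancel]
    _ ≤ #(antitoneIcc (fun i => L i - 1) (fun i => U i - 1)) * #(antitoneIcc L U) :=
        card_antitoneIcc_mul_card_le (fun i => by simp) (fun i => by simp) (fun i => by simp)
          (fun i => by simp)
    _ = #(antitoneIcc L U) ^ 2 := by
        rw [← card_antitoneIcc_add_const (fun i => L i - 1) (fun i => U i - 1) 1, sq]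
        simp only [sub_add_cancel]

end AntitoneIcc

namespace Fin

variable {α : Type*} [Preorder α] {k : ℕ}

lemma antitone_cons_iff {a : α} {x : Fin k → α} :
    Antitone (cons a x : Fin (k + 1) → α) ↔ (∀ i, x i ≤ a) ∧ Antitone x := by
  refine ⟨fun h => ⟨fun i => by simpa using h (zero_le i.succ),
    fun i j hij => by simpa using h (succ_le_succ_iff.2 hij)⟩, fun ⟨ha, hx⟩ i j hij => ?_⟩
  cases i using Fin.cases with
  | zero => cases j using Fin.cases <;> simp [ha]
  | succ i =>
    cases j using Fin.cases with
    | zero => exact absurd hij (by simp)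
    | succ j => simpa using hx (succ_le_succ_iff.1 hij)

lemma antitone_snoc_iff {b : α} {x : Fin k → α} :
    Antitone (snoc x b : Fin (k + 1) → α) ↔ (∀ i, b ≤ x i) ∧ Antitone x := by
  refine ⟨fun h => ⟨fun i => by simpa using h (le_last i.castSucc),
    fun i j hij => by simpa using h (castSucc_le_castSucc_iff.2 hij)⟩,
    fun ⟨hb, hx⟩ i j hij => ?_⟩
  cases j using Fin.lastCases with
  | last => cases i using Fin.lastCases <;> simp [hb]
  | cast j =>
    cases i using Fin.lastCases with
    | last => exact absurd hij (by simp)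
    | cast i => simpa using hx (castSucc_le_castSucc_iff.1 hij)

lemma snoc_le_snoc_iff {x y : Fin k → α} {a b : α} :
    (snoc x a : Fin (k + 1) → α) ≤ snoc y b ↔ x ≤ y ∧ a ≤ b :=
  ⟨fun h => ⟨fun i => by simpa using h i.castSucc, by simpa using h (last k)⟩,
    fun ⟨hxy, hab⟩ i => by cases i using Fin.lastCases <;> simp [hab, hxy _]⟩

end Fin

section PadTuples

variable {k : ℕ}

lemma card_antitoneIcc_cons {L U : Fin k → ℤ} {a : ℤ} (ha : ∀ i, U i ≤ a) :
    #(antitoneIcc (Fin.cons a L : Fin (k + 1) → ℤ) (Fin.cons a U)) = #(antitoneIcc L U) := by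
  refine card_nbij' Fin.tail (fun x : Fin k → ℤ => (Fin.cons a x : Fin (k + 1) → ℤ))
    (fun x hx => ?_) (fun x hx => ?_) (fun x hx => ?_) (fun x _ => Fin.tail_cons _ _)
  · rw [mem_coe, ← Fin.cons_self_tail x, mem_antitoneIcc, Fin.cons_le_cons, Fin.cons_le_cons,
      Fin.antitone_cons_iff] at hx
    exact mem_antitoneIcc.2 ⟨hx.1.2, hx.2.1.2, hx.2.2.2⟩
  · rw [mem_coe, mem_antitoneIcc] at hx
    rw [mem_coe, mem_antitoneIcc, Fin.cons_le_cons, Fin.cons_le_cons, Fin.antitone_cons_iff]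
    exact ⟨⟨le_rfl, hx.1⟩, ⟨le_rfl, hx.2.1⟩, fun i => (hx.2.1 i).trans (ha i), hx.2.2⟩
  · rw [mem_coe, mem_antitoneIcc] at hx
    have h0 : x 0 = a := le_antisymm (hx.2.1 0) (hx.1 0)
    simpa [h0] using Fin.cons_self_tail x

lemma card_antitoneIcc_snoc {L U : Fin k → ℤ} {b : ℤ} (hb : ∀ i, b ≤ L i) :
    #(antitoneIcc (Fin.snoc L b : Fin (k + 1) → ℤ) (Fin.snoc U b)) = #(antitoneIcc L U) := by
  refine card_nbij' Fin.init (fun x : Fin k → ℤ => (Fin.snoc x b : Fin (k + 1) → ℤ))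
    (fun x hx => ?_) (fun x hx => ?_) (fun x hx => ?_) (fun x _ => Fin.init_snoc _ _)
  · rw [mem_coe, ← Fin.snoc_init_self x, mem_antitoneIcc, Fin.snoc_le_snoc_iff,
      Fin.snoc_le_snoc_iff, Fin.antitone_snoc_iff] at hx
    exact mem_antitoneIcc.2 ⟨hx.1.1, hx.2.1.1, hx.2.2.2⟩
  · rw [mem_coe, mem_antitoneIcc] at hx
    rw [mem_coe, mem_antitoneIcc, Fin.snoc_le_snoc_iff, Fin.snoc_le_snoc_iff,
      Fin.antitone_snoc_iff]
    exact ⟨⟨hx.1, le_rfl⟩, ⟨hx.2.1, le_rfl⟩, fun i => (hb i).trans (hx.1 i), hx.2.2⟩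
  · rw [mem_coe, mem_antitoneIcc] at hx
    have hlast : x (Fin.last k) = b := le_antisymm (by simpa using hx.2.1 (Fin.last k))
      (by simpa using hx.1 (Fin.last k))
    simpa [hlast] using Fin.snoc_init_self x

end PadTuples

noncomputable def columnTuples (lam : ℕ → ℕ) (m : ℕ) (c : ℤ) : Finset (Fin m → ℤ) :=
  antitoneIcc (fun i => (lam i : ℤ)) (fun _ => c)

lemma card_columnTuples_mul_card_le {lam : ℕ → ℕ} (hlam : Antitone lam) {M : ℕ}
    (hM : lam M = 0) (n : ℕ) :
    #(columnTuples lam M (n + 1)) * #(columnTuples lam (M + 2) (n - 1)) ≤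
      #(columnTuples lam (M + 1) (n + 1)) * #(columnTuples lam (M + 1) (n - 1)) := by
  -- Padding `x` to `(a, x, 0)` moves its path one row south; `a` only has to dominate both
  -- `n + 1` and `lam 0`.
  set a : ℤ := n + 1 + lam 0 with ha
  have card_pad : #(columnTuples lam M (n + 1)) = #(antitoneIcc
      (Fin.cons a (Fin.snoc (fun i : Fin M => (lam i : ℤ)) 0) : Fin (M + 2) → ℤ)
      (Fin.cons a (Fin.snoc (fun _ => (n + 1 : ℤ)) 0))) := by
    rw [card_antitoneIcc_cons, card_antitoneIcc_snoc (fun _ => by positivity)]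
    · rfl
    · intro i
      cases i using Fin.lastCases with
      | last => simp [ha]; positivity
      | cast j => simp [ha]
  have card_cons : #(columnTuples lam (M + 1) (n + 1)) = #(antitoneIcc
      (Fin.cons a (fun i : Fin (M + 1) => (lam i : ℤ)) : Fin (M + 2) → ℤ)
      (Fin.cons a (fun _ => (n + 1 : ℤ)))) :=
    (card_antitoneIcc_cons fun _ => by omega).symm
  have card_snoc : #(columnTuples lam (M + 1) (n - 1)) = #(antitoneIcc
      (Fin.snoc (fun i : Fin (M + 1) => (lam i : ℤ)) 0 : Fin (M + 2) → ℤ)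
      (Fin.snoc (fun _ => (n - 1 : ℤ)) 0)) :=
    (card_antitoneIcc_snoc fun _ => by positivity).symm
  rw [card_pad, card_cons, card_snoc]
  refine (card_antitoneIcc_mul_card_le ?_ ?_ ?_ ?_).trans_eq (mul_comm _ _) <;> intro i <;>
    refine Fin.cases ?_ (fun j => Fin.lastCases ?_ (fun j => ?_) j) i <;>
    simp only [Fin.succ_castSucc, Fin.snoc_castSucc] <;> simp
  all_goals first | omega | exact hlam (Nat.le_succ _)

namespace NEPath

variable {m n : ℕ} (p : NEPath m n)

protected lemma ext {p q : NEPath m n} (h : p.pts = q.pts) : p = q := by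
  cases p; cases q; cases h; rfl

lemma fst_succ_le (k : ℕ) : (p.pts (k + 1)).1 ≤ (p.pts k).1 := by
  rcases lt_or_ge k (m + n) with hk | hk
  · rcases p.step k hk with h | h <;> omega
  · simp [p.tail k hk, p.tail (k + 1) (by omega)]

lemma fst_le_fst_succ_add_one (k : ℕ) : (p.pts k).1 ≤ (p.pts (k + 1)).1 + 1 := by
  rcases lt_or_ge k (m + n) with hk | hk
  · rcases p.step k hk with h | h <;> omega
  · simp [p.tail k hk, p.tail (k + 1) (by omega)]

lemma snd_le_snd_succ (k : ℕ) : (p.pts k).2 ≤ (p.pts (k + 1)).2 := by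
  rcases lt_or_ge k (m + n) with hk | hk
  · rcases p.step k hk with h | h <;> omega
  · simp [p.tail k hk, p.tail (k + 1) (by omega)]

lemma fst_antitone : Antitone fun k => (p.pts k).1 :=
  antitone_nat_of_succ_le p.fst_succ_le

lemma snd_monotone : Monotone fun k => (p.pts k).2 :=
  monotone_nat_of_le_succ p.snd_le_snd_succ

lemma fst_add_eq {k : ℕ} (hk : k ≤ m + n) : (p.pts k).1 + k = m + (p.pts k).2 := by
  induction k with
  | zero => simp [p.start]
  | succ k ih =>
    have := ih (by omega)
    rcases p.step k (by omega) with h | h <;> omega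

noncomputable def arrival (i : ℕ) : ℕ :=
  Nat.find (⟨m + n, by simp [p.tail]⟩ : ∃ k, (p.pts k).1 ≤ i)

lemma arrival_le_iff {i k : ℕ} : p.arrival i ≤ k ↔ (p.pts k).1 ≤ i := by
  rw [arrival, Nat.find_le_iff]
  exact ⟨fun ⟨_, hk, h⟩ => (p.fst_antitone hk).trans h, fun h => ⟨k, le_rfl, h⟩⟩

lemma arrival_le_add (i : ℕ) : p.arrival i ≤ m + n :=
  p.arrival_le_iff.2 (by simp [p.tail])

lemma fst_arrival {i : ℕ} (hi : i ≤ m) : (p.pts (p.arrival i)).1 = i := by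
  refine le_antisymm (p.arrival_le_iff.1 le_rfl) ?_
  rcases h : p.arrival i with _ | k
  · rw [p.start]
    exact hi
  · have hprev : ¬ (p.pts k).1 ≤ i := fun h' => by
      have := p.arrival_le_iff.2 h'
      omega
    have := p.fst_le_fst_succ_add_one k
    omega

noncomputable def entryCols : Fin m → ℤ := fun i => (p.pts (p.arrival i)).2

lemma entryCols_mem {lam : ℕ → ℕ} (hp : Avoids lam p) :
    p.entryCols ∈ columnTuples lam m n := by
  rw [columnTuples, mem_antitoneIcc]
  refine ⟨fun i => ?_, fun i => ?_, fun i j hij => ?_⟩ <;> simp only [entryCols]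
  · have := hp (p.arrival i)
    rw [p.fst_arrival i.is_le'] at this
    exact_mod_cast this
  · have := p.snd_monotone (p.arrival_le_add i)
    simp only [p.tail _ le_rfl] at this
    exact_mod_cast this
  · exact_mod_cast p.snd_monotone (p.arrival_le_iff.2 ((p.arrival_le_iff.1 le_rfl).trans hij))

lemma entryCols_injective : Function.Injective (entryCols : NEPath m n → Fin m → ℤ) := by
  intro p q h
  have harrival : ∀ i, p.arrival i = q.arrival i := by
    intro i
    rcases lt_or_ge i m with hi | hi
    · have hp := p.fst_add_eq (p.arrival_le_add i)
      have hq := q.fst_add_eq (q.arrival_le_add i)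
      rw [p.fst_arrival hi.le] at hp
      rw [q.fst_arrival hi.le] at hq
      have := congrFun h ⟨i, hi⟩
      simp only [entryCols, Nat.cast_inj] at this
      omega
    · have hp := p.arrival_le_iff (k := 0) (i := i)
      have hq := q.arrival_le_iff (k := 0) (i := i)
      simp only [p.start, q.start, hi, iff_true, Nat.le_zero] at hp hq
      rw [hp, hq]
  have hfst : ∀ k, (p.pts k).1 = (q.pts k).1 := fun k =>
    eq_of_forall_ge_iff fun i => by rw [← arrival_le_iff, ← arrival_le_iff, harrival]
  refine NEPath.ext (funext fun k => ?_)
  rcases le_or_gt k (m + n) with hk | hk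
  · have := p.fst_add_eq hk
    have := q.fst_add_eq hk
    have := hfst k
    ext <;> omega
  · rw [p.tail k hk.le, q.tail k hk.le]

end NEPath

section Decode

variable {m n : ℕ} {X : ℕ → ℕ}

-- The row at time `k` of the path that arrives in row `i` at time `m - i + X i`.
noncomputable def rowAt (m : ℕ) (X : ℕ → ℕ) (k : ℕ) : ℕ := sInf {i | m - i + X i ≤ k}

variable (hX : Antitone X) (hXm : X m = 0)
include hX hXm

lemma rowAt_le_iff {k i : ℕ} : rowAt m X k ≤ i ↔ m - i + X i ≤ k := by
  refine ⟨fun h => ?_, fun h => Nat.sInf_le h⟩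
  have hmem : m - rowAt m X k + X (rowAt m X k) ≤ k :=
    Nat.sInf_mem (s := {i | m - i + X i ≤ k}) ⟨m, by simp [hXm]⟩
  have := hX h
  omega

lemma rowAt_le (k : ℕ) : rowAt m X k ≤ m :=
  (rowAt_le_iff hX hXm).2 (by simp [hXm])

lemma sub_rowAt_add_le (k : ℕ) : m - rowAt m X k + X (rowAt m X k) ≤ k :=
  (rowAt_le_iff hX hXm).1 le_rfl

lemma rowAt_succ_le (k : ℕ) : rowAt m X (k + 1) ≤ rowAt m X k :=
  (rowAt_le_iff hX hXm).2 ((sub_rowAt_add_le hX hXm k).trans k.le_succ)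

lemma rowAt_le_rowAt_succ_add_one (k : ℕ) : rowAt m X k ≤ rowAt m X (k + 1) + 1 := by
  have h1 := sub_rowAt_add_le hX hXm (k + 1)
  have h2 := rowAt_le hX hXm (k + 1)
  generalize rowAt m X (k + 1) = r at h1 h2 ⊢
  have h3 : X (r + 1) ≤ X r := hX (by omega)
  have h4 : r = m → X r = 0 := fun h => h ▸ hXm
  exact (rowAt_le_iff hX hXm).2 (by omega)

variable (hXn : X 0 ≤ n)

noncomputable def NEPath.ofEntryCols : NEPath m n where
  pts k := (rowAt m X k, min k (m + n) + rowAt m X k - m)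
  start := by
    have := sub_rowAt_add_le hX hXm 0
    have := rowAt_le hX hXm 0
    ext <;> simp <;> omega
  step k hk := by
    have := rowAt_succ_le hX hXm k
    have := rowAt_le_rowAt_succ_add_one hX hXm k
    have := sub_rowAt_add_le hX hXm k
    simp only [min_eq_left hk.le, min_eq_left (Nat.succ_le_of_lt hk)]
    omega
  tail k hk := by
    have : rowAt m X k = 0 := Nat.le_zero.1 ((rowAt_le_iff hX hXm).2 (by omega))
    ext <;> simp [this, min_eq_right hk]

lemma NEPath.arrival_ofEntryCols (i : ℕ) :
    (NEPath.ofEntryCols hX hXm hXn).arrival i = m - i + X i :=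
  eq_of_forall_ge_iff fun _ => (NEPath.arrival_le_iff _).trans (rowAt_le_iff hX hXm)

lemma NEPath.entryCols_ofEntryCols :
    (NEPath.ofEntryCols hX hXm hXn).entryCols = fun i : Fin m => (X i : ℤ) := by
  funext i
  have hrow := (NEPath.ofEntryCols hX hXm hXn).fst_arrival i.is_le'
  rw [NEPath.arrival_ofEntryCols] at hrow
  have := hX (Nat.zero_le (i : ℕ))
  simp only [NEPath.entryCols, NEPath.arrival_ofEntryCols]
  change rowAt m X (m - i + X i) = i at hrow
  change ((min (m - i + X i) (m + n) + rowAt m X (m - i + X i) - m : ℕ) : ℤ) = X i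
  omega

lemma NEPath.avoids_ofEntryCols {lam : ℕ → ℕ} (hlam : ∀ i ≤ m, lam i ≤ X i) :
    Avoids lam (NEPath.ofEntryCols hX hXm hXn) := by
  intro k
  change lam (rowAt m X k) ≤ min k (m + n) + rowAt m X k - m
  have := sub_rowAt_add_le hX hXm k
  have := hlam _ (rowAt_le hX hXm k)
  have := hX (Nat.zero_le (rowAt m X k))
  omega

end Decode

lemma NEPath.exists_entryCols_eq {lam : ℕ → ℕ} {m n : ℕ} (h0 : lam m = 0) {x : Fin m → ℤ}
    (hx : x ∈ columnTuples lam m n) : ∃ p : NEPath m n, Avoids lam p ∧ p.entryCols = x := by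
  rw [columnTuples, mem_antitoneIcc] at hx
  obtain ⟨hlo, hhi, hanti⟩ := hx
  set X : ℕ → ℕ := fun i => if h : i < m then (x ⟨i, h⟩).toNat else 0
  have hXx (i : ℕ) (hi : i < m) : (X i : ℤ) = x ⟨i, hi⟩ := by
    simpa [X, hi] using le_trans (by positivity) (hlo ⟨i, hi⟩)
  have hX : Antitone X := by
    intro i j hij
    simp only [X]
    split_ifs with hj hi hi
    · exact Int.toNat_le_toNat (hanti (Fin.mk_le_mk.2 hij))
    · omega
    · exact Nat.zero_le _
    · exact le_rfl
  have hXm : X m = 0 := by simp [X]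
  have hXn : X 0 ≤ n := by
    rcases Nat.eq_zero_or_pos m with hm | hm
    · simp [X, hm]
    · have := hXx 0 hm
      have := hhi ⟨0, hm⟩
      simp only at this
      omega
  have hlam (i : ℕ) (hi : i ≤ m) : lam i ≤ X i := by
    rcases hi.lt_or_eq with hi | rfl
    · have := hXx i hi
      have := hlo ⟨i, hi⟩
      simp only at this
      omega
    · simp [h0]
  exact ⟨_, NEPath.avoids_ofEntryCols hX hXm hXn hlam,
    (NEPath.entryCols_ofEntryCols hX hXm hXn).trans (funext fun i => hXx i i.is_lt)⟩

lemma pathCount_eq_card_columnTuples {lam : ℕ → ℕ} {m : ℕ} (h0 : lam m = 0) (n : ℕ) :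
    pathCount lam m n = #(columnTuples lam m n) := by
  have himage : NEPath.entryCols '' {p : NEPath m n | Avoids lam p} = columnTuples lam m n := by
    ext x
    exact ⟨fun ⟨p, hp, hpx⟩ => hpx ▸ p.entryCols_mem hp,
      fun hx => NEPath.exists_entryCols_eq h0 hx⟩
  calc pathCount lam m n = Nat.card (NEPath.entryCols '' {p : NEPath m n | Avoids lam p}) :=
        (Nat.card_image_of_injective NEPath.entryCols_injective _).symm
    _ = #(columnTuples lam m n) := by rw [himage, Nat.card_coe_set_eq, Set.ncard_coe_finset]

lemma pathCount_eq_zero {lam : ℕ → ℕ} {m : ℕ} (h0 : lam m ≠ 0) (n : ℕ) :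
    pathCount lam m n = 0 := by
  rw [pathCount, Nat.card_eq_zero]
  exact Or.inl ⟨fun ⟨p, hp⟩ => h0 (by simpa [p.start] using hp 0)⟩

/-- The strong Simion conjecture: the antidiagonal path-count sequence is log concave. -/
theorem strong_simion (lam : ℕ → ℕ) (hlam : IsFerrers lam)
    (m n : ℕ) (hm : 1 ≤ m) (hn : 1 ≤ n) :
    pathCount lam (m - 1) (n + 1) * pathCount lam (m + 1) (n - 1) ≤
      pathCount lam m n ^ 2 := by
  obtain ⟨hanti, -⟩ := hlam
  obtain ⟨M, rfl⟩ := Nat.exists_eq_add_of_le' hm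
  rw [Nat.add_sub_cancel]
  rcases eq_or_ne (lam M) 0 with hM | hM
  · have hM1 : lam (M + 1) = 0 := Nat.eq_zero_of_le_zero (hM ▸ hanti M.le_succ)
    have hM2 : lam (M + 1 + 1) = 0 := Nat.eq_zero_of_le_zero (hM1 ▸ hanti (M + 1).le_succ)
    rw [pathCount_eq_card_columnTuples hM, pathCount_eq_card_columnTuples hM1,
      pathCount_eq_card_columnTuples hM2, Nat.cast_add_one, Nat.cast_sub hn, Nat.cast_one]
    exact (card_columnTuples_mul_card_le hanti hM n).trans
      (card_antitoneIcc_add_one_mul_card_sub_one_le _ _)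
  · simp [pathCount_eq_zero hM]
end

section
/- Let λ be a Ferrers diagram and N(m,n) the number of northeastern lattice paths from (m,0) to (0,n) avoiding the interior of λ. Then for all m, n ≥ 0: N(m,n+1) * N(m+1,n) ≤ N(m,n) * N(m+1,n+1). -/
open Function

section Splice

variable {α : Type*}

def splice (f g : ℕ → α) (t j : ℕ) : α := if j ≤ t then f j else g j

lemma splice_of_le {f g : ℕ → α} {t j : ℕ} (hj : j ≤ t) : splice f g t j = f j := if_pos hj

lemma splice_of_ge {f g : ℕ → α} {t j : ℕ} (h : f t = g t) (hj : t ≤ j) :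
    splice f g t j = g j := by
  unfold splice
  split_ifs with hjt
  · rw [le_antisymm hjt hj, h]
  · rfl

lemma splice_succ (f g : ℕ → α) (t j : ℕ) :
    splice f g (t + 1) (j + 1) = splice (fun i => f (i + 1)) (fun i => g (i + 1)) t j := by
  simp only [splice, Nat.add_le_add_iff_right]

lemma splice_mem {s : Set α} {f g : ℕ → α} (hf : ∀ j, f j ∈ s) (hg : ∀ j, g j ∈ s) (t j : ℕ) :
    splice f g t j ∈ s := by
  unfold splice
  split_ifs
  exacts [hf j, hg j]

lemma splice_splice (f g : ℕ → α) (t : ℕ) : splice (splice f g t) (splice g f t) t = f := by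
  funext j
  unfold splice
  split_ifs <;> rfl

noncomputable def firstMeet (f g : ℕ → α) : ℕ := sInf {j | f j = g j}

lemma firstMeet_splice (f g : ℕ → α) (t : ℕ) :
    firstMeet (splice f g t) (splice g f t) = firstMeet f g := by
  unfold firstMeet splice
  congr 1
  ext j
  change (if j ≤ t then f j else g j) = (if j ≤ t then g j else f j) ↔ f j = g j
  split_ifs
  exacts [Iff.rfl, eq_comm]

noncomputable def switchAtFirstMeet (x : (ℕ → α) × (ℕ → α)) : (ℕ → α) × (ℕ → α) :=
  (splice x.1 x.2 (firstMeet x.1 x.2), splice x.2 x.1 (firstMeet x.1 x.2))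

lemma switchAtFirstMeet_involutive : Involutive (switchAtFirstMeet (α := α)) := by
  rintro ⟨f, g⟩
  simp only [switchAtFirstMeet, firstMeet_splice, splice_splice]

end Splice

lemma exists_eq_of_antitone_of_le_succ_add_one {f g : ℕ → ℕ} (hf : Antitone f)
    (hg : ∀ k, g k ≤ g (k + 1) + 1) (h0 : f 0 ≤ g 0) {N : ℕ} (hN : g N ≤ f N) :
    ∃ k ≤ N, f k = g k := by
  induction N with
  | zero => exact ⟨0, le_rfl, le_antisymm h0 hN⟩
  | succ N ih =>
    by_cases hN' : g N ≤ f N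
    · obtain ⟨k, hk, hfg⟩ := ih hN'
      exact ⟨k, hk.trans N.le_succ, hfg⟩
    · have hfN : f (N + 1) ≤ f N := hf N.le_succ
      have := hg N
      exact ⟨N + 1, le_rfl, by omega⟩

namespace NEPath

variable {m n : ℕ}

lemma pts_injective : Injective (pts : NEPath m n → ℕ → ℕ × ℕ) := by
  rintro ⟨⟩ ⟨⟩ h
  cases h
  rfl

lemma pts_succ_injective : Injective fun (p : NEPath m n) j => p.pts (j + 1) := by
  intro p q h
  apply pts_injective
  funext j
  cases j with
  | zero => rw [p.start, q.start]
  | succ j => exact congrFun h j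

-- The second path is advanced by one step, so that meeting becomes equality of the two functions.
def alignedPts {a b c d : ℕ} (x : NEPath a b × NEPath c d) : (ℕ → ℕ × ℕ) × (ℕ → ℕ × ℕ) :=
  (x.1.pts, fun j => x.2.pts (j + 1))

lemma alignedPts_injective {a b c d : ℕ} : Injective (alignedPts : NEPath a b × NEPath c d → _) :=
  pts_injective.prodMap pts_succ_injective

lemma eq_of_forall_le {p q : NEPath m n} (h : ∀ k ≤ m + n, p.pts k = q.pts k) : p = q := by
  apply pts_injective
  funext k
  by_cases hk : k ≤ m + n
  · exact h k hk
  · rw [p.tail k (by omega), q.tail k (by omega)]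

lemma pts_succ_cases (p : NEPath m n) (k : ℕ) :
    ((p.pts (k + 1)).1 + 1 = (p.pts k).1 ∧ (p.pts (k + 1)).2 = (p.pts k).2) ∨
    ((p.pts (k + 1)).1 = (p.pts k).1 ∧ (p.pts (k + 1)).2 = (p.pts k).2 + 1) ∨
    p.pts (k + 1) = p.pts k := by
  by_cases hk : k < m + n
  · rcases p.step k hk with h | h
    exacts [Or.inl h, Or.inr (Or.inl h)]
  · exact Or.inr (Or.inr (by rw [p.tail k (by omega), p.tail (k + 1) (by omega)]))

lemma fst_pts_antitone (p : NEPath m n) : Antitone fun k => (p.pts k).1 := by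
  refine antitone_nat_of_succ_le fun k => ?_
  rcases p.pts_succ_cases k with h | h | h
  · omega
  · omega
  · rw [h]

lemma fst_pts_le_succ_add_one (p : NEPath m n) (k : ℕ) : (p.pts k).1 ≤ (p.pts (k + 1)).1 + 1 := by
  rcases p.pts_succ_cases k with h | h | h
  · omega
  · omega
  · rw [h]; omega

lemma snd_pts_monotone (p : NEPath m n) : Monotone fun k => (p.pts k).2 := by
  refine monotone_nat_of_le_succ fun k => ?_
  rcases p.pts_succ_cases k with h | h | h
  · omega
  · omega
  · rw [h]

lemma pts_le (p : NEPath m n) (k : ℕ) : p.pts k ≤ (m, n) := by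
  refine Prod.mk_le_mk.mpr ⟨?_, ?_⟩
  · simpa [p.start] using p.fst_pts_antitone (Nat.zero_le k)
  · simpa [p.tail (max k (m + n)) (le_max_right _ _)] using
      p.snd_pts_monotone (le_max_left k (m + n))

instance : Finite (NEPath m n) :=
  Finite.of_injective (fun (p : NEPath m n) (k : Fin (m + n + 1)) =>
      (⟨p.pts k, p.pts_le k⟩ : Set.Iic (m, n))) fun p q h =>
    eq_of_forall_le fun k hk => congrArg Subtype.val (congrFun h ⟨k, by omega⟩)

lemma snd_pts_add (p : NEPath m n) {k : ℕ} (hk : k ≤ m + n) :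
    (p.pts k).2 + m = k + (p.pts k).1 := by
  induction k with
  | zero => simp [p.start]
  | succ k ih =>
    have := ih (by omega)
    rcases p.step k (by omega) with h | h <;> omega

lemma exists_pts_eq_pts_succ (p : NEPath m (n + 1)) (q : NEPath (m + 1) n) :
    ∃ t ≤ m + n, p.pts t = q.pts (t + 1) := by
  have h0 : (p.pts 0).1 ≤ (q.pts 1).1 := by
    simpa [p.start, q.start] using q.fst_pts_le_succ_add_one 0
  have hN : (q.pts (m + n + 1)).1 ≤ (p.pts (m + n)).1 := by
    simp [q.tail (m + n + 1) (by omega)]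
  obtain ⟨t, ht, hrow⟩ := exists_eq_of_antitone_of_le_succ_add_one p.fst_pts_antitone
    (fun k => q.fst_pts_le_succ_add_one (k + 1)) h0 hN
  have hp := p.snd_pts_add (k := t) (by omega)
  have hq := q.snd_pts_add (k := t + 1) (by omega)
  exact ⟨t, ht, Prod.ext hrow (by omega)⟩

lemma firstMeet_le (p : NEPath m (n + 1)) (q : NEPath (m + 1) n) :
    firstMeet p.pts (fun j => q.pts (j + 1)) ≤ m + n := by
  obtain ⟨t, ht, hpq⟩ := exists_pts_eq_pts_succ p q
  exact (Nat.sInf_le hpq).trans ht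

lemma pts_firstMeet (p : NEPath m (n + 1)) (q : NEPath (m + 1) n) :
    p.pts (firstMeet p.pts fun j => q.pts (j + 1)) =
      q.pts (firstMeet p.pts (fun j => q.pts (j + 1)) + 1) :=
  Nat.sInf_mem (s := {j | p.pts j = q.pts (j + 1)})
    (let ⟨t, _, hpq⟩ := exists_pts_eq_pts_succ p q; ⟨t, hpq⟩)

section TailSwap

variable (p : NEPath m (n + 1)) (q : NEPath (m + 1) n) {t : ℕ} (ht : t ≤ m + n)
  (hpq : p.pts t = q.pts (t + 1))

def tailSwapFst : NEPath m n where
  pts := splice p.pts (fun j => q.pts (j + 1)) t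
  start := by rw [splice_of_le (Nat.zero_le t), p.start]
  step j hj := by
    rcases lt_or_ge j t with hjt | htj
    · rw [splice_of_le hjt.le, splice_of_le hjt]
      exact p.step j (by omega)
    · rw [splice_of_ge hpq htj, splice_of_ge hpq (by omega)]
      exact q.step (j + 1) (by omega)
  tail j hj := by
    rw [splice_of_ge hpq (by omega)]
    exact q.tail (j + 1) (by omega)

def tailSwapSnd : NEPath (m + 1) (n + 1) where
  pts := splice q.pts (fun j => p.pts (j - 1)) (t + 1)
  start := by rw [splice_of_le (Nat.zero_le _), q.start]
  step j hj := by
    rcases lt_or_ge j (t + 1) with hjt | htj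
    · rw [splice_of_le hjt.le, splice_of_le hjt]
      exact q.step j (by omega)
    · obtain ⟨i, rfl⟩ : ∃ i, j = i + 1 := ⟨j - 1, by omega⟩
      rw [splice_of_ge hpq.symm htj, splice_of_ge hpq.symm (by omega)]
      exact p.step i (by omega)
  tail j hj := by
    rw [splice_of_ge hpq.symm (by omega)]
    exact p.tail (j - 1) (by omega)

end TailSwap

noncomputable def tailSwap (x : NEPath m (n + 1) × NEPath (m + 1) n) :
    NEPath m n × NEPath (m + 1) (n + 1) :=
  (tailSwapFst x.1 x.2 (x.1.firstMeet_le x.2) (x.1.pts_firstMeet x.2),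
    tailSwapSnd x.1 x.2 (x.1.firstMeet_le x.2) (x.1.pts_firstMeet x.2))

lemma tailSwap_alignedPts (x : NEPath m (n + 1) × NEPath (m + 1) n) :
    alignedPts (tailSwap x) = switchAtFirstMeet (alignedPts x) := by
  refine Prod.ext rfl ?_
  funext j
  exact splice_succ x.2.pts (fun j => x.1.pts (j - 1)) _ j

lemma tailSwap_injective : Injective (tailSwap : NEPath m (n + 1) × NEPath (m + 1) n → _) := by
  intro x y h
  apply alignedPts_injective
  apply switchAtFirstMeet_involutive.injective
  rw [← tailSwap_alignedPts, ← tailSwap_alignedPts, h]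

end NEPath

lemma avoids_tailSwap (lam : ℕ → ℕ) {m n : ℕ} (x : NEPath m (n + 1) × NEPath (m + 1) n)
    (hx : Avoids lam x.1 ∧ Avoids lam x.2) :
    Avoids lam (NEPath.tailSwap x).1 ∧ Avoids lam (NEPath.tailSwap x).2 :=
  ⟨splice_mem (s := {y : ℕ × ℕ | lam y.1 ≤ y.2}) hx.1 (fun j => hx.2 (j + 1)) _,
    splice_mem (s := {y : ℕ × ℕ | lam y.1 ≤ y.2}) hx.2 (fun j => hx.1 (j - 1)) _⟩

lemma pathCount_mul_pathCount (lam : ℕ → ℕ) (a b c d : ℕ) :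
    pathCount lam a b * pathCount lam c d =
      Nat.card {x : NEPath a b × NEPath c d // Avoids lam x.1 ∧ Avoids lam x.2} := by
  rw [Nat.card_congr Equiv.subtypeProdEquivProd, Nat.card_prod, pathCount, pathCount]

theorem simion_eq_one_general (lam : ℕ → ℕ) (m n : ℕ) :
    pathCount lam m (n + 1) * pathCount lam (m + 1) n ≤
      pathCount lam m n * pathCount lam (m + 1) (n + 1) := by
  rw [pathCount_mul_pathCount, pathCount_mul_pathCount]
  exact Nat.card_le_card_of_injective _
    (Subtype.map_injective (avoids_tailSwap lam) NEPath.tailSwap_injective)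

/-- Equation (1) of the paper, proved by the tail-swapping injection Ψ. -/
theorem simion_eq_one (lam : ℕ → ℕ) (hlam : IsFerrers lam) (m n : ℕ) :
    pathCount lam m (n + 1) * pathCount lam (m + 1) n ≤
      pathCount lam m n * pathCount lam (m + 1) (n + 1) :=
  simion_eq_one_general lam m n
end
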